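/- Let μ be a finite positive Borel measure on the unit circle T with infinite support, K_n its Christoffel kernel, and for w ∈ T let B_{n+1}(w,z) := (1 − conj(w) z) K_n(w,z). If ζ and ξ are zeros of B_{n+1}(w,·) lying on T, then the zero sets of the two polynomials B_{n+1}(ζ,·) and B_{n+1}(ξ,·) coincide. -/

import Mathlib

/-!
Write `⟪p, q⟫ = ∫_𝕋 p q̄ dμ` and `𝒫ₙ` for the polynomials of degree `≤ n`; on `𝒫ₙ` the kernel
`K_n(w, ·)` reproduces evaluation at `w`. Because `|z| = 1` on the support of `μ`,
`⟪z r, (1 - ū z) s⟫ = ⟪(z - u) r, s⟫`, so `B_{n+1}(u, ·)` is orthogonal to `z 𝒫_{n-1}`.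
If `B_{n+1}(w, ζ) = 0` then `B_{n+1}(ζ, w) = conj B_{n+1}(w, ζ) = 0`, hence
`B_{n+1}(ζ, ·) = (1 - w̄ z) s` with `s ∈ 𝒫ₙ`, and by the identity above `s` is orthogonal to every
`q ∈ 𝒫ₙ` vanishing at `w`. Such an `s` is a multiple of `K_n(w, ·)`, so `B_{n+1}(ζ, ·)` is a
nonzero multiple of `B_{n+1}(w, ·)`; the same holds for `ξ`.
-/

open MeasureTheory Polynomial Filter
open scoped ComplexConjugate Topology

/-- The Christoffel kernel `K_n(w,z) = ∑_{j=0}^n conj(φ_j(w)) φ_j(z)`. -/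
noncomputable def christoffelK (φ : ℕ → Polynomial ℂ) (n : ℕ) (w z : ℂ) : ℂ :=
  ∑ j ∈ Finset.range (n + 1), conj ((φ j).eval w) * (φ j).eval z

/-- The para-orthogonal polynomial `B_{n+1}(w,z) = (1 − conj(w) z) K_n(w,z)`. -/
noncomputable def paraOrtho (φ : ℕ → Polynomial ℂ) (n : ℕ) (w z : ℂ) : ℂ :=
  (1 - conj w * z) * christoffelK φ n w z

open Finset

lemma Polynomial.X_sub_C_mul_mem_degreeLE_iff {R : Type*} [Ring R] [Nontrivial R] {a : R}
    {r : R[X]} {n : ℕ} : (X - C a) * r ∈ degreeLE R n ↔ r ∈ degreeLT R n := by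
  rcases eq_or_ne r 0 with rfl | hr
  · simp
  rw [mem_degreeLE, mem_degreeLT, degree_mul' (by simpa using hr), degree_X_sub_C,
    degree_eq_natDegree hr]
  norm_cast
  omega

lemma exists_eq_one_sub_mul_of_eval_eq_zero {n : ℕ} {w : ℂ} (hw : ‖w‖ = 1) {p : ℂ[X]}
    (hp : p ∈ degreeLE ℂ ↑(n + 1)) (hpw : p.eval w = 0) :
    ∃ s ∈ degreeLE ℂ n, p = (1 - C (conj w) * X) * s := by
  obtain ⟨t, rfl⟩ := dvd_iff_isRoot.mpr hpw
  have ht : t ∈ degreeLE ℂ n := by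
    rw [← degreeLT_succ_eq_degreeLE, ← X_sub_C_mul_mem_degreeLE_iff (a := w)]
    exact_mod_cast hp
  refine ⟨C (-w) * t, by simpa [← smul_eq_C_mul] using Submodule.smul_mem _ (-w) ht, ?_⟩
  have hww : C w * C (conj w) = 1 := by rw [← C_mul, Complex.mul_conj', hw]; simp
  rw [← mul_assoc, map_neg]
  congr 1
  linear_combination -X * hww

noncomputable def christoffelPoly (φ : ℕ → ℂ[X]) (n : ℕ) (w : ℂ) : ℂ[X] :=
  ∑ j ∈ range (n + 1), conj ((φ j).eval w) • φ j

noncomputable def paraOrthoPoly (φ : ℕ → ℂ[X]) (n : ℕ) (w : ℂ) : ℂ[X] :=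
  (1 - C (conj w) * X) * christoffelPoly φ n w

section Polynomials

variable (φ : ℕ → ℂ[X]) (n : ℕ)

@[simp]
lemma eval_christoffelPoly (w z : ℂ) : (christoffelPoly φ n w).eval z = christoffelK φ n w z := by
  simp [christoffelPoly, christoffelK, eval_finsetSum]

@[simp]
lemma eval_paraOrthoPoly (w z : ℂ) : (paraOrthoPoly φ n w).eval z = paraOrtho φ n w z := by
  simp [paraOrthoPoly, paraOrtho]

lemma christoffelK_swap (w z : ℂ) : christoffelK φ n z w = conj (christoffelK φ n w z) := by
  simp only [christoffelK, map_sum, map_mul, Complex.conj_conj, mul_comm]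

lemma paraOrtho_swap (w z : ℂ) : paraOrtho φ n z w = conj (paraOrtho φ n w z) := by
  simp only [paraOrtho, christoffelK_swap φ n w z, map_mul, map_sub, map_one, Complex.conj_conj]
  ring

lemma christoffelK_self_ne_zero (hφ₀ : (φ 0).degree = 0) (u : ℂ) : christoffelK φ n u u ≠ 0 := by
  have hφ₀u : (φ 0).eval u ≠ 0 := by
    rw [eq_C_of_degree_eq_zero hφ₀, eval_C]
    exact coeff_ne_zero_of_eq_degree hφ₀
  have hpos : 0 < (christoffelK φ n u u).re := by
    simp only [christoffelK, Complex.re_sum, mul_comm (conj _), Complex.mul_conj, Complex.ofReal_re]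
    exact sum_pos' (fun j _ => Complex.normSq_nonneg _)
      ⟨0, by simp, Complex.normSq_pos.mpr hφ₀u⟩
  exact fun h => hpos.ne' (by simp [h])

variable {φ}

lemma christoffelPoly_mem_degreeLE (hdeg : ∀ k, (φ k).degree ≤ (k : ℕ)) (w : ℂ) :
    christoffelPoly φ n w ∈ degreeLE ℂ n :=
  Submodule.sum_mem _ fun j hj => Submodule.smul_mem _ _ <| mem_degreeLE.mpr <|
    (hdeg j).trans <| by exact_mod_cast Nat.lt_succ_iff.mp (mem_range.mp hj)

lemma paraOrthoPoly_ne_zero (hφ₀ : (φ 0).degree = 0) (u : ℂ) : paraOrthoPoly φ n u ≠ 0 := by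
  refine mul_ne_zero (fun h => by simpa using congrArg (eval 0) h) fun h => ?_
  exact christoffelK_self_ne_zero φ n hφ₀ u (by simpa using congrArg (eval u) h)

lemma paraOrthoPoly_mem_degreeLE (hdeg : ∀ k, (φ k).degree ≤ (k : ℕ)) (w : ℂ) :
    paraOrthoPoly φ n w ∈ degreeLE ℂ ↑(n + 1) := by
  have hlin : (1 - C (conj w) * X : ℂ[X]).degree ≤ 1 :=
    (degree_sub_le _ _).trans (max_le (degree_one_le.trans zero_le_one) (degree_C_mul_X_le _))
  refine mem_degreeLE.mpr ((degree_mul_le _ _).trans ?_)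
  calc _ ≤ 1 + (n : WithBot ℕ) :=
        add_le_add hlin (mem_degreeLE.mp (christoffelPoly_mem_degreeLE n hdeg w))
    _ = ↑(n + 1) := by norm_cast; omega

end Polynomials

-- Integrating over `𝕋` rather than over `ℂ` makes the form sesquilinear for every finite `μ`;
-- for `μ` carried by `𝕋` it is the `L²(μ)` inner product.
noncomputable def circleInner (μ : Measure ℂ) [IsFiniteMeasure μ] : ℂ[X] →ₗ[ℂ] ℂ[X] →ₗ⋆[ℂ] ℂ :=
  have hint (p q : ℂ[X]) :
      Integrable (fun z => p.eval z * conj (q.eval z)) (μ.restrict (Metric.sphere 0 1)) :=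
    (p.continuous.mul (Complex.continuous_conj.comp q.continuous)).continuousOn.integrableOn_compact
      (isCompact_sphere 0 1)
  LinearMap.mk₂'ₛₗ (RingHom.id ℂ) (starRingEnd ℂ)
    (fun p q => ∫ z in Metric.sphere 0 1, p.eval z * conj (q.eval z) ∂μ)
    (fun p₁ p₂ q => by simp only [eval_add, add_mul, integral_add (hint p₁ q) (hint p₂ q)])
    (fun c p q => by
      simp only [eval_smul, smul_eq_mul, mul_assoc, integral_const_mul, RingHom.id_apply])
    (fun p q₁ q₂ => by
      simp only [eval_add, map_add, mul_add, integral_add (hint p q₁) (hint p q₂)])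
    (fun c p q => by
      simp only [eval_smul, smul_eq_mul, map_mul, mul_left_comm _ (conj c), integral_const_mul])

section CircleInner

variable {μ : Measure ℂ} [IsFiniteMeasure μ]

lemma circleInner_apply (p q : ℂ[X]) :
    circleInner μ p q = ∫ z in Metric.sphere 0 1, p.eval z * conj (q.eval z) ∂μ :=
  rfl

lemma circleInner_self_eq_zero
    (hμ : ∀ s : Finset ℂ, μ.restrict (Metric.sphere 0 1) (↑s)ᶜ ≠ 0) {p : ℂ[X]}
    (hp : circleInner μ p p = 0) : p = 0 := by
  set ν := μ.restrict (Metric.sphere 0 1)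
  have hnormSq : ∫ z, Complex.normSq (p.eval z) ∂ν = 0 := by
    rw [← Complex.ofReal_inj, ← integral_complex_ofReal, Complex.ofReal_zero, ← hp]
    simp only [circleInner_apply, Complex.mul_conj, ν]
  have hint : Integrable (fun z => Complex.normSq (p.eval z)) ν :=
    (Complex.continuous_normSq.comp p.continuous).continuousOn.integrableOn_compact
      (isCompact_sphere 0 1)
  have hae : ∀ᵐ z ∂ν, p.eval z = 0 :=
    ((integral_eq_zero_iff_of_nonneg (fun _ => Complex.normSq_nonneg _) hint).mp hnormSq).mono
      fun z hz => Complex.normSq_eq_zero.mp hz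
  by_contra hp0
  refine hμ p.roots.toFinset (measure_mono_null (fun z hz => ?_) (ae_iff.mp hae))
  simpa [hp0] using hz

lemma circleInner_X_mul_one_sub_mul (u : ℂ) (p q : ℂ[X]) :
    circleInner μ (X * p) ((1 - C (conj u) * X) * q) = circleInner μ ((X - C u) * p) q := by
  refine setIntegral_congr_fun Metric.isClosed_sphere.measurableSet fun z hz => ?_
  have hz : conj z * z = 1 := by simp [Complex.conj_mul', mem_sphere_zero_iff_norm.mp hz]
  simp only [eval_mul, eval_sub, eval_one, eval_C, eval_X, map_mul, map_sub, map_one,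
    Complex.conj_conj]
  linear_combination (-(u * eval z p * conj (eval z q))) * hz

end CircleInner

section Orthogonality

variable {μ : Measure ℂ} [IsFiniteMeasure μ] {φ : ℕ → ℂ[X]}

lemma circleInner_christoffelPoly (hdeg : ∀ k, (φ k).degree = (k : ℕ))
    (horth : ∀ k m, circleInner μ (φ k) (φ m) = if k = m then 1 else 0) (n : ℕ) (w : ℂ)
    {q : ℂ[X]} (hq : q ∈ degreeLE ℂ n) : circleInner μ q (christoffelPoly φ n w) = q.eval w := by
  let S : Polynomial.Sequence ℂ := ⟨φ, hdeg⟩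
  rw [← S.span_degreeLE fun i _ => (leadingCoeff_ne_zero.mpr (S.ne_zero i)).isUnit] at hq
  refine LinearMap.eqOn_span' (f := (circleInner μ).flip (christoffelPoly φ n w)) (g := leval w)
    ?_ hq
  rintro _ ⟨i, hi, rfl⟩
  have hi : i ∈ range (n + 1) := mem_range.mpr (Nat.lt_succ_of_le hi)
  simp [S, christoffelPoly, horth, hi]

lemma circleInner_X_mul_paraOrthoPoly (hdeg : ∀ k, (φ k).degree = (k : ℕ))
    (horth : ∀ k m, circleInner μ (φ k) (φ m) = if k = m then 1 else 0) {n : ℕ} (u : ℂ)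
    {r : ℂ[X]} (hr : r ∈ degreeLT ℂ n) : circleInner μ (X * r) (paraOrthoPoly φ n u) = 0 := by
  rw [paraOrthoPoly, circleInner_X_mul_one_sub_mul,
    circleInner_christoffelPoly hdeg horth n u (X_sub_C_mul_mem_degreeLE_iff.mpr hr)]
  simp

lemma exists_eq_smul_christoffelPoly
    (hμ : ∀ s : Finset ℂ, μ.restrict (Metric.sphere 0 1) (↑s)ᶜ ≠ 0)
    (hdeg : ∀ k, (φ k).degree = (k : ℕ))
    (horth : ∀ k m, circleInner μ (φ k) (φ m) = if k = m then 1 else 0) {n : ℕ} {w : ℂ}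
    {s : ℂ[X]} (hs : s ∈ degreeLE ℂ n)
    (hperp : ∀ q ∈ degreeLE ℂ n, q.eval w = 0 → circleInner μ q s = 0) :
    ∃ c : ℂ, s = c • christoffelPoly φ n w := by
  set K := christoffelPoly φ n w
  set c := s.eval w / christoffelK φ n w w
  set t := s - c • K
  have ht : t ∈ degreeLE ℂ n :=
    sub_mem hs <| Submodule.smul_mem _ _ <|
      christoffelPoly_mem_degreeLE n (fun k => (hdeg k).le) w
  have htw : t.eval w = 0 := by
    simp [t, K, c, div_mul_cancel₀ _ (christoffelK_self_ne_zero φ n (hdeg 0) w)]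
  refine ⟨c, sub_eq_zero.mp (circleInner_self_eq_zero hμ ?_)⟩
  calc circleInner μ t t = circleInner μ t s - conj c * circleInner μ t K := by
        simp [t, map_sub]
    _ = 0 := by rw [hperp t ht htw, circleInner_christoffelPoly hdeg horth n w ht, htw]; simp

theorem paraOrthoPoly_eq_smul_of_paraOrtho_eq_zero
    (hμ : ∀ s : Finset ℂ, μ.restrict (Metric.sphere 0 1) (↑s)ᶜ ≠ 0)
    (hdeg : ∀ k, (φ k).degree = (k : ℕ))
    (horth : ∀ k m, circleInner μ (φ k) (φ m) = if k = m then 1 else 0) {n : ℕ} {w ζ : ℂ}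
    (hw : ‖w‖ = 1) (hζw : paraOrtho φ n ζ w = 0) :
    ∃ c : ℂ, c ≠ 0 ∧ paraOrthoPoly φ n ζ = c • paraOrthoPoly φ n w := by
  obtain ⟨s, hs, hBs⟩ := exists_eq_one_sub_mul_of_eval_eq_zero hw
    (paraOrthoPoly_mem_degreeLE n (fun k => (hdeg k).le) ζ) (by simpa using hζw)
  have hperp : ∀ q ∈ degreeLE ℂ n, q.eval w = 0 → circleInner μ q s = 0 := by
    intro q hq hqw
    obtain ⟨r, rfl⟩ := dvd_iff_isRoot.mpr hqw
    rw [← circleInner_X_mul_one_sub_mul, ← hBs]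
    exact circleInner_X_mul_paraOrthoPoly hdeg horth ζ (X_sub_C_mul_mem_degreeLE_iff.mp hq)
  obtain ⟨c, rfl⟩ := exists_eq_smul_christoffelPoly hμ hdeg horth hs hperp
  have hB : paraOrthoPoly φ n ζ = c • paraOrthoPoly φ n w := by
    rw [hBs, paraOrthoPoly, mul_smul_comm]
  refine ⟨c, fun hc => paraOrthoPoly_ne_zero n (hdeg 0) ζ ?_, hB⟩
  rw [hB, hc, zero_smul]

end Orthogonality

theorem paraOrtho_zero_sets_eq_general
    (μ : Measure ℂ) [IsFiniteMeasure μ]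
    (hμT : μ (Metric.sphere (0 : ℂ) 1)ᶜ = 0)
    (hμinf : ∀ s : Finset ℂ, μ ((s : Set ℂ)ᶜ) ≠ 0)
    (φ : ℕ → Polynomial ℂ)
    (hdeg : ∀ k, (φ k).degree = (k : ℕ))
    (horth : ∀ k m, ∫ z, (φ k).eval z * conj ((φ m).eval z) ∂μ
        = if k = m then 1 else 0)
    (n : ℕ) (w : ℂ) (hw : w ∈ Metric.sphere (0 : ℂ) 1)
    (ζ ξ : ℂ)
    (hζ0 : paraOrtho φ n w ζ = 0) (hξ0 : paraOrtho φ n w ξ = 0) :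
    {z : ℂ | paraOrtho φ n ζ z = 0} = {z : ℂ | paraOrtho φ n ξ z = 0} := by
  have hres : μ.restrict (Metric.sphere 0 1) = μ := Measure.restrict_eq_self_of_ae_mem hμT
  have horth' : ∀ k m, circleInner μ (φ k) (φ m) = if k = m then 1 else 0 := by
    simpa only [circleInner_apply, hres] using horth
  have hμ : ∀ s : Finset ℂ, μ.restrict (Metric.sphere 0 1) (↑s)ᶜ ≠ 0 := by rwa [hres]
  have hw1 : ‖w‖ = 1 := mem_sphere_zero_iff_norm.mp hw
  obtain ⟨a, ha, hζB⟩ := paraOrthoPoly_eq_smul_of_paraOrtho_eq_zero hμ hdeg horth' hw1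
    (by rw [paraOrtho_swap, hζ0, map_zero])
  obtain ⟨b, hb, hξB⟩ := paraOrthoPoly_eq_smul_of_paraOrtho_eq_zero hμ hdeg horth' hw1
    (by rw [paraOrtho_swap, hξ0, map_zero])
  ext z
  simp [← eval_paraOrthoPoly, hζB, hξB, ha, hb]

/-- If `ζ` and `ξ` are zeros of `B_{n+1}(w,·)` lying on the unit circle, then the zero sets
of the two polynomials `B_{n+1}(ζ,·)` and `B_{n+1}(ξ,·)` coincide. -/
theorem paraOrtho_zero_sets_eq
    (μ : Measure ℂ) [IsFiniteMeasure μ]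
    (hμT : μ (Metric.sphere (0 : ℂ) 1)ᶜ = 0)
    (hμinf : ∀ s : Finset ℂ, μ ((s : Set ℂ)ᶜ) ≠ 0)
    (φ : ℕ → Polynomial ℂ)
    (hdeg : ∀ k, (φ k).degree = (k : ℕ))
    (hlead : ∀ k, 0 < ((φ k).leadingCoeff).re ∧ ((φ k).leadingCoeff).im = 0)
    (horth : ∀ k m, ∫ z, (φ k).eval z * conj ((φ m).eval z) ∂μ
        = if k = m then 1 else 0)
    (n : ℕ) (w : ℂ) (hw : w ∈ Metric.sphere (0 : ℂ) 1)
    (ζ ξ : ℂ) (hζ : ζ ∈ Metric.sphere (0 : ℂ) 1) (hξ : ξ ∈ Metric.sphere (0 : ℂ) 1)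
    (hζ0 : paraOrtho φ n w ζ = 0) (hξ0 : paraOrtho φ n w ξ = 0) :
    {z : ℂ | paraOrtho φ n ζ z = 0} = {z : ℂ | paraOrtho φ n ξ z = 0} :=
  paraOrtho_zero_sets_eq_general μ hμT hμinf φ hdeg horth n w hw ζ ξ hζ0 hξ0
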